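/- Let G_n be a weakly convergent sequence of bounded-degree graphs with limit measure μ on the space Gr_d of rooted countable graphs, and let (G_n^1, ..., G_n^K) be a K-splitting of the sequence, i.e., the G_n^i are vertex-disjoint spanned subgraphs covering V(G_n), the number of edges between distinct parts is o(|V(G_n)|), the ratios |V(G_n^i)|/|V(G_n)| converge to a_i, and each part with a_i ≠ 0 is a weakly convergent graph sequence with limit measure μ_i. Then μ = Σ_{i : a_i ≠ 0} a_i · μ_i. -/

import Mathlib

open MeasureTheory Filter Topology

/-- A rooted `(r,d)`-ball: a finite connected rooted graph with maximum degree at most `d`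
in which every vertex is within distance `rad` of the root. -/
structure Ball (d : ℕ) where
  rad : ℕ
  n : ℕ
  graph : SimpleGraph (Fin n)
  root : Fin n
  conn : graph.Connected
  deg : ∀ v, (graph.neighborSet v).ncard ≤ d
  small : ∀ v, graph.dist root v ≤ rad

/-- Rooted isomorphism of rooted graphs. -/
def RootedIso {V W : Type*} (G : SimpleGraph V) (x : V) (H : SimpleGraph W) (y : W) : Prop :=
  ∃ e : G ≃g H, e x = y

/-- The vertex set of the ball of radius `r` around `x`. -/
def ballVerts {V : Type*} (G : SimpleGraph V) (r : ℕ) (x : V) : Set V :=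
  {y | G.Reachable x y ∧ G.dist x y ≤ r}

lemma rootMemBall {V : Type*} (G : SimpleGraph V) (r : ℕ) (x : V) : x ∈ ballVerts G r x :=
  ⟨SimpleGraph.Reachable.refl x, by simp [SimpleGraph.dist_self]⟩

/-- The rooted `r`-ball of `G` around `x` is rooted-isomorphic to the rooted graph `(H,y)`. -/
def ballIso {V W : Type*} (G : SimpleGraph V) (r : ℕ) (x : V)
    (H : SimpleGraph W) (y : W) : Prop :=
  RootedIso (G.induce (ballVerts G r x)) ⟨x, rootMemBall G r x⟩ H y

/-- `pfreq G α` is the fraction of vertices of `G` whose rooted `α.rad`-ball is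
isomorphic to the rooted ball `α`. -/
noncomputable def pfreq {V : Type*} {d : ℕ} (G : SimpleGraph V) (α : Ball d) : ℝ :=
  ({x : V | ballIso G α.rad x α.graph α.root}).ncard / (Nat.card V)

/-- The statistical distance of two finite graphs with respect to an enumeration `E`
of all rooted `(r,d)`-balls. -/
noncomputable def ds {d : ℕ} (E : ℕ → Ball d) {V W : Type*}
    (G : SimpleGraph V) (H : SimpleGraph W) : ℝ :=
  ∑' i : ℕ, (1 / 2 : ℝ) ^ (i + 1) * |pfreq G (E i) - pfreq H (E i)|

/-- `E` enumerates all rooted `(r,d)`-balls up to rooted isomorphism. -/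
def Covers {d : ℕ} (E : ℕ → Ball d) : Prop :=
  ∀ β : Ball d, ∃ i, (E i).rad = β.rad ∧ RootedIso (E i).graph (E i).root β.graph β.root

/-- Maximum degree of `G` is at most `d`. -/
def DegLe {V : Type*} (G : SimpleGraph V) (d : ℕ) : Prop :=
  ∀ v, (G.neighborSet v).ncard ≤ d

/-!
If the `r`-ball around a vertex `x` of `G_n` contains no endpoint of an edge between distinct
parts, then it lies inside the part of `x` and is the same rooted ball in that part. A ball of
radius `r` in a graph of degree at most `d` has at most `(d+1)^r` vertices, so all other vertices
number at most `(d+1)^r` times the cross edges, which is `o(|V(G_n)|)`. Hence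
`p_{G_n}(α) = Σ_i (|V(G_n^i)|/|V(G_n)|) p_{G_n^i}(α) + o(1)`, and the right-hand side tends to
`Σ_i a_i μ_i(α)`; parts with `a_i = 0` contribute nothing because frequencies lie in `[0, 1]`.
-/

namespace Set

lemma ncard_biUnion_le_ncard_mul {ι α : Type*} {T : Set ι} (hT : T.Finite) (f : ι → Set α)
    {m : ℕ} (hf : ∀ i ∈ T, (f i).ncard ≤ m) : (⋃ i ∈ T, f i).ncard ≤ T.ncard * m := by
  have hU : (⋃ i ∈ T, f i) = ⋃ i ∈ hT.toFinset, f i := by simp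
  rw [hU, ncard_eq_toFinset_card T hT, ← smul_eq_mul]
  exact hT.toFinset.set_ncard_biUnion_le f |>.trans <|
    Finset.sum_le_card_nsmul _ _ _ fun i hi => hf i (hT.mem_toFinset.mp hi)

end Set

section Balls

variable {V : Type*} {G : SimpleGraph V} {r : ℕ} {x y : V}

lemma mem_ballVerts_iff : y ∈ ballVerts G r x ↔ ∃ w : G.Walk x y, w.length ≤ r := by
  constructor
  · rintro ⟨hreach, hdist⟩
    obtain ⟨w, hw⟩ := hreach.exists_walk_length_eq_dist
    exact ⟨w, hw ▸ hdist⟩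
  · rintro ⟨w, hw⟩
    exact ⟨w.reachable, (SimpleGraph.dist_le w).trans hw⟩

lemma mem_ballVerts_comm : y ∈ ballVerts G r x ↔ x ∈ ballVerts G r y := by
  simp only [mem_ballVerts_iff]
  exact ⟨fun ⟨w, hw⟩ => ⟨w.reverse, by simpa⟩,
    fun ⟨w, hw⟩ => ⟨w.reverse, by simpa⟩⟩

lemma mem_ballVerts_of_mem_support (w : G.Walk x y) (hw : w.length ≤ r) {u : V}
    (hu : u ∈ w.support) : u ∈ ballVerts G r x := by
  classical
  exact mem_ballVerts_iff.mpr ⟨w.takeUntil u hu, (w.length_takeUntil_le_length hu).trans hw⟩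

lemma ballVerts_zero : ballVerts G 0 x = {x} := by
  ext y
  simp only [mem_ballVerts_iff, Nat.le_zero, Set.mem_singleton_iff]
  constructor
  · rintro ⟨w, hw⟩
    exact (SimpleGraph.Walk.eq_of_length_eq_zero hw).symm
  · rintro rfl
    exact ⟨.nil, rfl⟩

lemma ballVerts_succ_subset :
    ballVerts G (r + 1) x ⊆ insert x (⋃ u ∈ G.neighborSet x, ballVerts G r u) := by
  intro y hy
  obtain ⟨w, hw⟩ := mem_ballVerts_iff.mp hy
  cases w with
  | nil => exact Set.mem_insert _ _
  | cons hadj p =>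
    refine Set.mem_insert_of_mem _ (Set.mem_biUnion hadj (mem_ballVerts_iff.mpr ⟨p, ?_⟩))
    simpa using hw

lemma ncard_ballVerts_le [Finite V] {d : ℕ} (hdeg : DegLe G d) (r : ℕ) (x : V) :
    (ballVerts G r x).ncard ≤ (d + 1) ^ r := by
  induction r generalizing x with
  | zero => simp [ballVerts_zero]
  | succ r ih =>
    calc (ballVerts G (r + 1) x).ncard
        ≤ (⋃ u ∈ G.neighborSet x, ballVerts G r u).ncard + 1 :=
          (Set.ncard_le_ncard ballVerts_succ_subset).trans (Set.ncard_insert_le _ _)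
      _ ≤ d * (d + 1) ^ r + 1 := by
          gcongr
          exact (Set.ncard_biUnion_le_ncard_mul (Set.toFinite _) _ fun u _ => ih u).trans
            (Nat.mul_le_mul_right _ (hdeg x))
      _ ≤ (d + 1) ^ (r + 1) := by
          have := Nat.one_le_pow r (d + 1) d.succ_pos
          rw [pow_succ]
          nlinarith

lemma mem_ballVerts_induce_iff {P : Set V} (hx : x ∈ P) (hsub : ballVerts G r x ⊆ P) (z : P) :
    z ∈ ballVerts (G.induce P) r ⟨x, hx⟩ ↔ ↑z ∈ ballVerts G r x := by
  simp only [mem_ballVerts_iff]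
  constructor
  · rintro ⟨w, hw⟩
    exact ⟨w.map (SimpleGraph.Embedding.induce P).toHom, (w.length_map _).trans_le hw⟩
  · rintro ⟨w, hw⟩
    have hsupp : ∀ u ∈ w.support, u ∈ P := fun u hu =>
      hsub (mem_ballVerts_of_mem_support w hw hu)
    refine ⟨w.induce P hsupp, ?_⟩
    have hlen := congrArg SimpleGraph.Walk.length (w.map_induce hsupp)
    rw [SimpleGraph.Walk.length_map] at hlen
    rwa [hlen]

lemma rootedIso_congr_left {V' W : Type*} {G' : SimpleGraph V'} {x' : V'} (e : G ≃g G')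
    (he : e x = x') {H : SimpleGraph W} {y : W} : RootedIso G x H y ↔ RootedIso G' x' H y := by
  constructor
  · rintro ⟨f, hf⟩
    exact ⟨e.symm.trans f, by simp [← he, hf]⟩
  · rintro ⟨f, hf⟩
    exact ⟨e.trans f, by simp [he, hf]⟩

lemma ballIso_induce_iff {W : Type*} {P : Set V} (hx : x ∈ P) (hsub : ballVerts G r x ⊆ P)
    {H : SimpleGraph W} {y : W} : ballIso G r x H y ↔ ballIso (G.induce P) r ⟨x, hx⟩ H y := by
  have hmem := mem_ballVerts_induce_iff hx hsub
  let e : G.induce (ballVerts G r x) ≃g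
      (G.induce P).induce (ballVerts (G.induce P) r ⟨x, hx⟩) :=
    ⟨⟨fun z => ⟨⟨z, hsub z.2⟩, (hmem _).mpr z.2⟩, fun z => ⟨z.1, (hmem _).mp z.2⟩,
      fun _ => rfl, fun _ => rfl⟩, by simp [SimpleGraph.comap_adj]⟩
  exact rootedIso_congr_left e rfl

end Balls

section Splitting

variable {V ι : Type*} {d : ℕ} {G : SimpleGraph V}

def crossEdges (G : SimpleGraph V) (part : V → ι) : Set (V × V) :=
  {pq | G.Adj pq.1 pq.2 ∧ part pq.1 ≠ part pq.2}

def nearCrossEdges (G : SimpleGraph V) (part : V → ι) (r : ℕ) : Set V :=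
  {x | ∃ pq ∈ crossEdges G part, pq.1 ∈ ballVerts G r x}

def vertsOfType (G : SimpleGraph V) (α : Ball d) : Set V :=
  {x | ballIso G α.rad x α.graph α.root}

lemma ballVerts_subset_of_notMem_nearCrossEdges {part : V → ι} {r : ℕ} {x : V}
    (hx : x ∉ nearCrossEdges G part r) : ballVerts G r x ⊆ {y | part y = part x} := by
  intro y hy
  by_contra hne
  obtain ⟨w, hw⟩ := mem_ballVerts_iff.mp hy
  obtain ⟨e, he, hfst, hsnd⟩ := w.exists_boundary_dart {y | part y = part x} rfl hne
  exact hx ⟨e.toProd, ⟨e.adj, fun h => hsnd (h.symm.trans hfst)⟩,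
    mem_ballVerts_of_mem_support w hw (w.dart_fst_mem_support_of_mem_darts he)⟩

lemma ncard_nearCrossEdges_le [Finite V] (hdeg : DegLe G d) (part : V → ι) (r : ℕ) :
    (nearCrossEdges G part r).ncard ≤ (crossEdges G part).ncard * (d + 1) ^ r := by
  have hsub : nearCrossEdges G part r ⊆ ⋃ pq ∈ crossEdges G part, ballVerts G r pq.1 :=
    fun _ ⟨_, hpq, hx⟩ => Set.mem_biUnion hpq (mem_ballVerts_comm.mp hx)
  exact (Set.ncard_le_ncard hsub).trans <| Set.ncard_biUnion_le_ncard_mul (Set.toFinite _) _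
    fun pq _ => ncard_ballVerts_le hdeg r pq.1

lemma mem_vertsOfType_iff_of_notMem_nearCrossEdges {part : V → ι} {α : Ball d} {x : V}
    (hx : x ∉ nearCrossEdges G part α.rad) :
    x ∈ vertsOfType G α ↔
      x ∈ ⋃ i, Subtype.val '' vertsOfType (G.induce {y | part y = i}) α := by
  have hsub := ballVerts_subset_of_notMem_nearCrossEdges hx
  have hiff := ballIso_induce_iff (P := {y | part y = part x}) (H := α.graph) (y := α.root)
    rfl hsub
  rw [Set.mem_iUnion]
  constructor
  · intro h
    exact ⟨part x, ⟨x, rfl⟩, hiff.mp h, rfl⟩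
  · rintro ⟨i, ⟨x, hxi⟩, h, rfl⟩
    obtain rfl : part x = i := hxi
    exact hiff.mpr h

lemma ncard_iUnion_vertsOfType_induce [Finite V] [Fintype ι] (part : V → ι) (α : Ball d) :
    (⋃ i, Subtype.val '' vertsOfType (G.induce {y | part y = i}) α).ncard =
      ∑ i, (vertsOfType (G.induce {y | part y = i}) α).ncard := by
  have hdisj : Pairwise fun i j =>
      Disjoint (Subtype.val '' vertsOfType (G.induce {y | part y = i}) α)
        (Subtype.val '' vertsOfType (G.induce {y | part y = j}) α) := by
    intro i j hij
    refine Set.disjoint_left.mpr ?_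
    rintro _ ⟨⟨x, hxi⟩, _, rfl⟩ ⟨⟨_, hxj⟩, _, hx⟩
    obtain rfl : _ = x := hx
    exact hij (hxi.symm.trans hxj)
  rw [Set.ncard_iUnion_of_finite (fun _ => Set.toFinite _) hdisj, finsum_eq_sum_of_fintype]
  exact Finset.sum_congr rfl fun i _ => Set.ncard_image_of_injective _ Subtype.val_injective

/-- Off the vertices near a cross edge, the types in `G` and in the parts agree. -/
lemma abs_ncard_vertsOfType_sub_sum_le [Finite V] [Fintype ι] (part : V → ι) (α : Ball d) :
    |((vertsOfType G α).ncard : ℝ) -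
        ∑ i, ((vertsOfType (G.induce {y | part y = i}) α).ncard : ℝ)| ≤
       (nearCrossEdges G part α.rad).ncard := by
  set S := nearCrossEdges G part α.rad
  have hle : ∀ {s t : Set V}, (∀ x ∉ S, x ∈ s → x ∈ t) →
      (s.ncard : ℝ) ≤ t.ncard + S.ncard := by
    intro s t hst
    have hsub : s ⊆ t ∪ S := fun x hx => by
      by_cases hxS : x ∈ S
      · exact Or.inr hxS
      · exact Or.inl (hst x hxS hx)
    exact_mod_cast (Set.ncard_le_ncard hsub).trans (Set.ncard_union_le _ _)
  rw [← Nat.cast_sum, ← ncard_iUnion_vertsOfType_induce, abs_sub_le_iff, sub_le_iff_le_add',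
    sub_le_iff_le_add']
  exact ⟨hle fun x hx => (mem_vertsOfType_iff_of_notMem_nearCrossEdges hx).mp,
    hle fun x hx => (mem_vertsOfType_iff_of_notMem_nearCrossEdges hx).mpr⟩

lemma natCard_mul_pfreq [Finite V] (G : SimpleGraph V) (α : Ball d) :
    (Nat.card V : ℝ) * pfreq G α = (vertsOfType G α).ncard := by
  rcases eq_or_ne (Nat.card V) 0 with hV | hV
  · have : IsEmpty V := Finite.card_eq_zero_iff.mp hV
    simp [Set.eq_empty_of_isEmpty (vertsOfType G α)]
  · exact mul_div_cancel₀ _ (Nat.cast_ne_zero.mpr hV)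

lemma abs_pfreq_le_one [Finite V] (G : SimpleGraph V) (α : Ball d) : |pfreq G α| ≤ 1 := by
  rw [abs_of_nonneg (by unfold pfreq; positivity)]
  exact div_le_one_of_le₀ (mod_cast Set.ncard_le_card _) (Nat.cast_nonneg _)

lemma abs_pfreq_sub_sum_le [Finite V] [Fintype ι] (hdeg : DegLe G d) (part : V → ι)
    (α : Ball d) :
    |pfreq G α - ∑ i, (Nat.card {x // part x = i} : ℝ) / Nat.card V *
        pfreq (G.induce {x | part x = i}) α|
      ≤ (d + 1) ^ α.rad * ((crossEdges G part).ncard / Nat.card V) := by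
  have hsum : ∑ i, (Nat.card {x // part x = i} : ℝ) / Nat.card V *
        pfreq (G.induce {x | part x = i}) α =
      (∑ i, ((vertsOfType (G.induce {y | part y = i}) α).ncard : ℝ)) / Nat.card V := by
    rw [Finset.sum_div]
    refine Finset.sum_congr rfl fun i _ => ?_
    rw [div_mul_eq_mul_div]
    exact congrArg (· / _) (natCard_mul_pfreq _ α)
  have hG : pfreq G α = ((vertsOfType G α).ncard : ℝ) / Nat.card V := rfl
  rw [hsum, hG, ← sub_div, abs_div, Nat.abs_cast, mul_div_assoc']
  gcongr
  calc _ ≤ ((nearCrossEdges G part α.rad).ncard : ℝ) :=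
        abs_ncard_vertsOfType_sub_sum_le part α
    _ ≤ (crossEdges G part).ncard * (d + 1) ^ α.rad :=
        mod_cast ncard_nearCrossEdges_le hdeg part _
    _ = _ := mul_comm _ _

end Splitting

theorem splitting_limit_general {d : ℕ} (V : ℕ → Type) (hfin : ∀ n, Finite (V n))
    (G : ∀ n, SimpleGraph (V n)) (hdeg : ∀ n, DegLe (G n) d)
    (μ : Ball d → ℝ)
    (hμ : ∀ α : Ball d, Tendsto (fun n => pfreq (G n) α) atTop (𝓝 (μ α)))
    (K : ℕ) (part : ∀ n, V n → Fin K)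
    (hedges : Tendsto
      (fun n => (({pq : V n × V n |
          (G n).Adj pq.1 pq.2 ∧ part n pq.1 ≠ part n pq.2}).ncard : ℝ) / Nat.card (V n))
      atTop (𝓝 0))
    (a : Fin K → ℝ)
    (ha : ∀ i, Tendsto
      (fun n => (Nat.card {x : V n // part n x = i} : ℝ) / Nat.card (V n)) atTop (𝓝 (a i)))
    (μi : Fin K → Ball d → ℝ)
    (hμi : ∀ i, a i ≠ 0 → ∀ α : Ball d,
      Tendsto (fun n => pfreq ((G n).induce {x : V n | part n x = i}) α) atTop
        (𝓝 (μi i α))) :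
    ∀ α : Ball d, μ α = ∑ i : Fin K, a i * μi i α := by
  intro α
  have := hfin
  have hsplit : Tendsto (fun n => ∑ i, (Nat.card {x : V n // part n x = i} : ℝ) /
      Nat.card (V n) * pfreq ((G n).induce {x | part n x = i}) α) atTop
      (𝓝 (∑ i, a i * μi i α)) := by
    refine tendsto_finsetSum _ fun i _ => ?_
    by_cases hai : a i = 0
    · rw [hai, zero_mul]
      exact (hai ▸ ha i).zero_mul_isBoundedUnder_le
        (isBoundedUnder_of ⟨1, fun n => abs_pfreq_le_one _ α⟩)
    · exact (ha i).mul (hμi i hai α)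
  have herror : Tendsto (fun n => pfreq (G n) α -
      ∑ i, (Nat.card {x : V n // part n x = i} : ℝ) / Nat.card (V n) *
        pfreq ((G n).induce {x | part n x = i}) α) atTop (𝓝 0) :=
    squeeze_zero_norm (fun n => abs_pfreq_sub_sum_le (hdeg n) (part n) α)
      (by simpa [crossEdges] using hedges.const_mul _)
  exact tendsto_nhds_unique (hμ α) (by simpa using herror.add hsplit)

/-- If `{G_n}` converges weakly to the limit statistics `μ` and
`(G_n^1,…,G_n^K)` is a `K`-splitting of the sequence, given by partitioning the vertex
set into `K` parts with `o(|V(G_n)|)` edges between distinct parts, with part ratios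
converging to `a_i` and the parts with `a_i ≠ 0` weakly convergent with limit
statistics `μ_i`, then `μ = Σ_{i : a_i ≠ 0} a_i·μ_i`. -/
theorem splitting_limit {d : ℕ} (V : ℕ → Type) (hfin : ∀ n, Finite (V n))
    (G : ∀ n, SimpleGraph (V n)) (hdeg : ∀ n, DegLe (G n) d)
    (hcard : Tendsto (fun n => Nat.card (V n)) atTop atTop)
    (μ : Ball d → ℝ)
    (hμ : ∀ α : Ball d, Tendsto (fun n => pfreq (G n) α) atTop (𝓝 (μ α)))
    (K : ℕ) (part : ∀ n, V n → Fin K)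
    (hedges : Tendsto
      (fun n => (({pq : V n × V n |
          (G n).Adj pq.1 pq.2 ∧ part n pq.1 ≠ part n pq.2}).ncard : ℝ) / Nat.card (V n))
      atTop (𝓝 0))
    (a : Fin K → ℝ)
    (ha : ∀ i, Tendsto
      (fun n => (Nat.card {x : V n // part n x = i} : ℝ) / Nat.card (V n)) atTop (𝓝 (a i)))
    (μi : Fin K → Ball d → ℝ)
    (hμi : ∀ i, a i ≠ 0 → ∀ α : Ball d,
      Tendsto (fun n => pfreq ((G n).induce {x : V n | part n x = i}) α) atTop
        (𝓝 (μi i α))) :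
    ∀ α : Ball d, μ α = ∑ i : Fin K, a i * μi i α :=
  splitting_limit_general V hfin G hdeg μ hμ K part hedges a ha μi hμi
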